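/- arXiv:2601.05025 — 2 statements merged into one kernel-verified Lean document; each statement's English description precedes it below -/
import Mathlib

section
/- Let A be a C*-algebra and let T : A → A be a positive bounded linear operator. Suppose the operator-valued resolvent function λ ↦ (λ·id − T)⁻¹, defined on the resolvent set of T and viewed as a meromorphic function from ℂ into the Banach space of bounded operators on A, has a pole of order k at r(T), and has a pole of order m at some α ∈ σ(T) with |α| = r(T). Then m ≤ k; i.e., the pole order at r(T) is maximal among the pole orders at points of the peripheral spectrum {α ∈ σ(T) : |α| = r(T)}. -/
/-!
For `‖z‖ > r(T)` the resolvent is the Neumann series `∑ z⁻ⁿ⁻¹ Tⁿ`. Since `Tⁿ x ≥ 0` for `x ≥ 0`,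
the series at `z` is dominated termwise by the series at `‖z‖`, and in a C⋆-algebra this gives
`‖R(z) x‖ ≤ 6 ‖R(‖z‖) x‖`. Approach the peripheral point `α` radially, `z = tα` with `t ↓ 1`:
positive elements span `A`, so the leading coefficient of the pole at `α` is nonzero on some
`x ≥ 0`, and `‖R(tα) x‖` grows like `(t - 1)⁻ᵐ`; but it is bounded by `6 ‖R(t r(T))‖ ‖x‖`,
which is `O((t - 1)⁻ᵏ)` by the pole at `r(T)`. Hence `m ≤ k`.
-/

open Filter Topology

/-- `f` has a pole of order `k` at `z₀`: the function `z ↦ (z - z₀)^k • f z` extends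
analytically to `z₀` with a nonzero value there. -/
def IsPoleOfOrder {B : Type*} [NormedAddCommGroup B] [NormedSpace ℂ B]
    (f : ℂ → B) (z₀ : ℂ) (k : ℕ) : Prop :=
  ∃ g : ℂ → B, AnalyticAt ℂ g z₀ ∧ g z₀ ≠ 0 ∧
    ∀ᶠ z in nhdsWithin z₀ {z₀}ᶜ, (z - z₀) ^ k • f z = g z

theorem le_of_tendsto_pow_mul_of_abs_le {ι : Type*} {l : Filter ι} [l.NeBot] {ε u v : ι → ℝ}
    {a b : ℝ} {m k : ℕ} (hε : Tendsto ε l (𝓝 0)) (hε₀ : ∀ᶠ i in l, 0 ≤ ε i)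
    (hu : Tendsto (fun i => ε i ^ m * u i) l (𝓝 a)) (ha : a ≠ 0)
    (hv : Tendsto (fun i => ε i ^ k * v i) l (𝓝 b)) (huv : ∀ᶠ i in l, |u i| ≤ v i) :
    m ≤ k := by
  by_contra! hkm
  refine ha (tendsto_nhds_unique hu
    (squeeze_zero_norm' (a := fun i => ε i ^ (m - k) * (ε i ^ k * v i)) ?_ ?_))
  · filter_upwards [hε₀, huv] with i hεi hi
    calc ‖ε i ^ m * u i‖ = ε i ^ (m - k) * (ε i ^ k * |u i|) := by
          rw [Real.norm_eq_abs, abs_mul, abs_pow, abs_of_nonneg hεi, ← mul_assoc, ← pow_add,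
            Nat.sub_add_cancel hkm.le]
      _ ≤ ε i ^ (m - k) * (ε i ^ k * v i) := by gcongr
  · have := (hε.pow (m - k)).mul hv
    rwa [zero_pow (Nat.sub_ne_zero_of_lt hkm), zero_mul] at this

namespace IsPoleOfOrder

variable {B : Type*} [NormedAddCommGroup B] [NormedSpace ℂ B] {f : ℂ → B} {z₀ : ℂ} {k m : ℕ}

theorem exists_tendsto (h : IsPoleOfOrder f z₀ k) :
    ∃ Q ≠ 0, Tendsto (fun z => (z - z₀) ^ k • f z) (𝓝[≠] z₀) (𝓝 Q) := by
  obtain ⟨g, hg, hg₀, hfg⟩ := h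
  exact ⟨g z₀, hg₀, (hg.continuousAt.tendsto.mono_left nhdsWithin_le_nhds).congr'
    (hfg.mono fun _ => Eq.symm)⟩

theorem le_of_isPoleOfOrder (hm : IsPoleOfOrder f z₀ m) (hk : IsPoleOfOrder f z₀ k) : m ≤ k := by
  obtain ⟨Q, hQ, hm⟩ := hm.exists_tendsto
  obtain ⟨P, -, hk⟩ := hk.exists_tendsto
  refine le_of_tendsto_pow_mul_of_abs_le (l := 𝓝[≠] z₀) (b := ‖P‖) (ε := fun z => ‖z - z₀‖)
    (u := fun z => ‖f z‖) ?_ (.of_forall fun _ => norm_nonneg _) ?_ (norm_ne_zero_iff.mpr hQ) ?_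
    (.of_forall fun _ => (abs_norm _).le)
  · exact tendsto_nhds_of_tendsto_nhdsWithin (tendsto_norm_sub_self_nhdsNE z₀)
  · simpa only [norm_smul, norm_pow] using hm.norm
  · simpa only [norm_smul, norm_pow] using hk.norm

end IsPoleOfOrder

section NeumannSeries

variable {A : Type*} [NormedRing A] [NormedAlgebra ℂ A] [CompleteSpace A]

theorem hasSum_pow_smul_inverse_one_sub_smul (a : A) {w : ℂ}
    (hw : ‖w‖ₑ < (spectralRadius ℂ a)⁻¹) :
    HasSum (fun n : ℕ => w ^ n • a ^ n) (Ring.inverse (1 - w • a)) ∧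
      Summable fun n : ℕ => ‖w ^ n • a ^ n‖ := by
  obtain ⟨r, hwr, hr⟩ := ENNReal.lt_iff_exists_nnreal_btwn.mp hw
  have hr₀ : 0 < r := ENNReal.coe_pos.mp (lt_of_le_of_lt bot_le hwr)
  -- `w ↦ (1 - w • a)⁻¹` is holomorphic on the disc of radius `r`, so its Taylor series,
  -- the geometric one, converges on that disc.
  have H := (spectrum.hasFPowerSeriesOnBall_inverse_one_sub_smul ℂ a).exchange_radius
    ((spectrum.differentiableOn_inverse_one_sub_smul hr).hasFPowerSeriesOnBall hr₀)
  have hw_mem : w ∈ Metric.eball (0 : ℂ) r := by rwa [Metric.mem_eball, edist_zero_right]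
  have hterm : ∀ n : ℕ, (ContinuousMultilinearMap.mkPiRing ℂ (Fin n) (a ^ n)) (fun _ => w) =
      w ^ n • a ^ n := by simp
  constructor
  · simpa only [hterm, zero_add] using H.hasSum hw_mem
  · simpa only [hterm] using
      FormalMultilinearSeries.summable_norm_apply _ (Metric.eball_subset_eball H.r_le hw_mem)

theorem hasSum_resolvent_of_spectralRadius_lt (a : A) {z : ℂ} (hz : spectralRadius ℂ a < ‖z‖ₑ) :
    HasSum (fun n : ℕ => z⁻¹ ^ (n + 1) • a ^ n) (resolvent a z) ∧
      Summable fun n : ℕ => ‖z‖⁻¹ ^ (n + 1) * ‖a ^ n‖ := by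
  have hz₀ : z ≠ 0 := by rintro rfl; simp at hz
  have hw : ‖z⁻¹‖ₑ < (spectralRadius ℂ a)⁻¹ := by
    rw [enorm_inv hz₀]; exact ENNReal.inv_lt_inv.mpr hz
  obtain ⟨hsum, hnorm⟩ := hasSum_pow_smul_inverse_one_sub_smul a hw
  have hres : resolvent a z = z⁻¹ • Ring.inverse (1 - z⁻¹ • a) := by
    have := spectrum.units_smul_resolvent_self (r := Units.mk0 z hz₀) (a := a)
    simp only [Units.smul_def, Units.val_inv_eq_inv_val, Units.val_mk0] at this
    rw [← inv_smul_smul₀ hz₀ (resolvent a z), this, resolvent, map_one]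
  constructor
  · rw [hres]
    simpa only [smul_smul, pow_succ'] using hsum.const_smul z⁻¹
  · refine (hnorm.mul_left ‖z‖⁻¹).congr fun n => ?_
    rw [norm_smul, norm_pow, norm_inv, pow_succ']; ring
end NeumannSeries

theorem summable_smul_of_norm_le {𝕜 E : Type*} [NormedField 𝕜] [NormedAddCommGroup E]
    [NormedSpace 𝕜 E] [CompleteSpace E] {b : ℕ → E} {c : ℕ → 𝕜} {d : ℕ → ℝ}
    (hcd : ∀ n, ‖c n‖ ≤ d n) (hd : Summable fun n => d n * ‖b n‖) :
    Summable fun n => c n • b n :=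
  .of_norm_bounded hd fun n => by rw [norm_smul]; gcongr; exact hcd n

namespace CStarAlgebra

variable {A : Type*} [NonUnitalCStarAlgebra A] [PartialOrder A] [StarOrderedRing A]

theorem exists_nonneg_apply_ne_zero {M : Type*} [AddCommGroup M] [Module ℂ M] {f : A →ₗ[ℂ] M}
    (hf : f ≠ 0) : ∃ x : A, 0 ≤ x ∧ f x ≠ 0 := by
  by_contra! h
  exact hf (LinearMap.ext_on span_nonneg fun x hx => (h x hx).trans (LinearMap.zero_apply x).symm)

theorem norm_le_three_mul_of_neg_le_of_le {y z : A} (hzy : -z ≤ y) (hyz : y ≤ z) :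
    ‖y‖ ≤ 3 * ‖z‖ := by
  have h₀ : 0 ≤ y + z := by simpa [neg_le_iff_add_nonneg] using hzy
  have h₂ : ‖y + z‖ ≤ ‖z + z‖ := norm_le_norm_of_nonneg_of_le h₀ (add_le_add_left hyz z)
  calc ‖y‖ = ‖(y + z) - z‖ := by rw [add_sub_cancel_right]
    _ ≤ ‖z + z‖ + ‖z‖ := (norm_sub_le _ _).trans (by gcongr)
    _ ≤ 3 * ‖z‖ := by linarith [norm_add_le z z]

theorem norm_tsum_real_smul_le_of_nonneg {b : ℕ → A} (hb : ∀ n, 0 ≤ b n) {t d : ℕ → ℝ}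
    (htd : ∀ n, ‖t n‖ ≤ d n) (hd : Summable fun n => d n * ‖b n‖) :
    ‖∑' n, t n • b n‖ ≤ 3 * ‖∑' n, d n • b n‖ := by
  have hts := summable_smul_of_norm_le htd hd
  have htd' : ∀ n, |t n| ≤ d n := htd
  have hdd : ∀ n, ‖d n‖ ≤ d n := fun n => (abs_of_nonneg ((abs_nonneg _).trans (htd' n))).le
  have hds := summable_smul_of_norm_le hdd hd
  refine norm_le_three_mul_of_neg_le_of_le ?_ ?_
  · rw [← tsum_neg]
    refine hds.neg.tsum_le_tsum (fun n => ?_) hts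
    rw [← neg_smul]
    exact smul_le_smul_of_nonneg_right (neg_le_of_abs_le (htd' n)) (hb n)
  · exact hts.tsum_le_tsum
      (fun n => smul_le_smul_of_nonneg_right (le_of_abs_le (htd' n)) (hb n)) hds

theorem norm_tsum_smul_le_of_nonneg {b : ℕ → A} (hb : ∀ n, 0 ≤ b n) {c : ℕ → ℂ} {d : ℕ → ℝ}
    (hcd : ∀ n, ‖c n‖ ≤ d n) (hd : Summable fun n => d n * ‖b n‖) :
    ‖∑' n, c n • b n‖ ≤ 6 * ‖∑' n, (d n : ℂ) • b n‖ := by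
  have hre : ∀ n, ‖(c n).re‖ ≤ d n := fun n => (Complex.abs_re_le_norm _).trans (hcd n)
  have him : ∀ n, ‖(c n).im‖ ≤ d n := fun n => (Complex.abs_im_le_norm _).trans (hcd n)
  have hsplit : ∀ n, c n • b n = (c n).re • b n + Complex.I • (c n).im • b n := fun n => by
    conv_lhs => rw [← Complex.re_add_im (c n)]
    rw [add_smul, mul_comm, mul_smul, Complex.coe_smul, Complex.coe_smul]
  rw [tsum_congr hsplit, Summable.tsum_add (summable_smul_of_norm_le hre hd)
    ((summable_smul_of_norm_le him hd).const_smul _), tsum_const_smul'' Complex.I]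
  simp only [Complex.coe_smul]
  calc _ ≤ ‖∑' n, (c n).re • b n‖ + ‖∑' n, (c n).im • b n‖ := by
        grw [norm_add_le, norm_smul, Complex.norm_I, one_mul]
    _ ≤ 3 * ‖∑' n, d n • b n‖ + 3 * ‖∑' n, d n • b n‖ := by
        gcongr <;> exact norm_tsum_real_smul_le_of_nonneg hb ‹_› hd
    _ = _ := by ring

end CStarAlgebra

theorem tendsto_ofReal_mul_nhdsGT_one {z₀ : ℂ} (hz₀ : z₀ ≠ 0) :
    Tendsto (fun t : ℝ => (t : ℂ) * z₀) (𝓝[>] 1) (𝓝[≠] z₀) := by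
  refine tendsto_nhdsWithin_of_tendsto_nhds_of_eventually_within _ ?_ ?_
  · have : Continuous fun t : ℝ => (t : ℂ) * z₀ := by fun_prop
    simpa using (this.tendsto 1).mono_left nhdsWithin_le_nhds
  · filter_upwards [self_mem_nhdsWithin] with t (ht : 1 < t)
    simp [hz₀, ht.ne']

theorem tendsto_radial_norm_pow_mul {B : Type*} [NormedAddCommGroup B] [NormedSpace ℂ B]
    {f : ℂ → B} {z₀ : ℂ} {k : ℕ} {Q : B} (hz₀ : z₀ ≠ 0)
    (hQ : Tendsto (fun z => (z - z₀) ^ k • f z) (𝓝[≠] z₀) (𝓝 Q)) :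
    Tendsto (fun t : ℝ => ((t - 1) * ‖z₀‖) ^ k * ‖f (t * z₀)‖) (𝓝[>] 1) (𝓝 ‖Q‖) := by
  refine (hQ.norm.comp (tendsto_ofReal_mul_nhdsGT_one hz₀)).congr' ?_
  filter_upwards [self_mem_nhdsWithin] with t (ht : 1 < t)
  have : (t : ℂ) * z₀ - z₀ = ((t - 1 : ℝ) : ℂ) * z₀ := by push_cast; ring
  simp only [Function.comp_apply, this, norm_smul, norm_pow, norm_mul, Complex.norm_real,
    Real.norm_of_nonneg (sub_pos.2 ht).le]

theorem ContinuousLinearMap.pow_apply_nonneg {R E : Type*} [Semiring R] [TopologicalSpace E]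
    [AddCommMonoid E] [Module R E] [LE E] {T : E →L[R] E} (hT : ∀ x, 0 ≤ x → 0 ≤ T x) (n : ℕ)
    {x : E} (hx : 0 ≤ x) : 0 ≤ (T ^ n) x := by
  induction n with
  | zero => exact hx
  | succ n ih => rw [pow_succ']; exact hT _ ih

theorem norm_resolvent_apply_le_of_nonneg {A : Type*} [NonUnitalCStarAlgebra A] [PartialOrder A]
    [StarOrderedRing A] {T : A →L[ℂ] A} (hT : ∀ x, 0 ≤ x → 0 ≤ T x) {x : A} (hx : 0 ≤ x)
    {z : ℂ} (hz : spectralRadius ℂ T < ‖z‖ₑ) :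
    ‖resolvent T z x‖ ≤ 6 * ‖resolvent T (‖z‖ : ℂ) x‖ := by
  have hz' : spectralRadius ℂ T < ‖(‖z‖ : ℂ)‖ₑ := by
    rwa [← ofReal_norm, Complex.norm_real, norm_norm, ofReal_norm]
  obtain ⟨hR, hsum⟩ := hasSum_resolvent_of_spectralRadius_lt T hz
  obtain ⟨hR', -⟩ := hasSum_resolvent_of_spectralRadius_lt T hz'
  have hRx := (hR.mapL (ContinuousLinearMap.apply ℂ A x)).tsum_eq
  have hRx' := (hR'.mapL (ContinuousLinearMap.apply ℂ A x)).tsum_eq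
  simp only [ContinuousLinearMap.apply_apply] at hRx hRx'
  rw [← hRx, ← hRx']
  refine (CStarAlgebra.norm_tsum_smul_le_of_nonneg (fun n => T.pow_apply_nonneg hT n hx)
    (c := fun n => z⁻¹ ^ (n + 1)) (d := fun n => ‖z‖⁻¹ ^ (n + 1)) (fun n => by simp) ?_).trans_eq
    ?_
  · refine (hsum.mul_right ‖x‖).of_nonneg_of_le (fun n => by positivity) fun n => ?_
    rw [mul_assoc]; gcongr; exact (T ^ n).le_opNorm x
  · simp

theorem norm_resolvent_ofReal_mul_apply_le {A : Type*} [NonUnitalCStarAlgebra A]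
    [PartialOrder A] [StarOrderedRing A] {T : A →L[ℂ] A} (hT : ∀ x, 0 ≤ x → 0 ≤ T x) {x : A}
    (hx : 0 ≤ x) {α : ℂ} (hα : ‖α‖ = (spectralRadius ℂ T).toReal) (hα₀ : α ≠ 0) {t : ℝ}
    (ht : 1 < t) :
    ‖resolvent T (t * α) x‖ ≤ ‖resolvent T ((t : ℂ) * ‖α‖)‖ * (6 * ‖x‖) := by
  have hα₀' : 0 < ‖α‖ := norm_pos_iff.mpr hα₀
  have hnorm : ‖(t : ℂ) * α‖ = t * ‖α‖ := by
    rw [norm_mul, Complex.norm_real, Real.norm_of_nonneg (by linarith)]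
  have hρ : spectralRadius ℂ T ≠ ⊤ := (ENNReal.toReal_pos_iff.mp (hα ▸ hα₀')).2.ne
  have hz : spectralRadius ℂ T < ‖(t : ℂ) * α‖ₑ := by
    rw [← ENNReal.ofReal_toReal hρ, ← hα, ← ofReal_norm, hnorm,
      ENNReal.ofReal_lt_ofReal_iff (mul_pos (by linarith) hα₀')]
    nlinarith
  calc ‖resolvent T (t * α) x‖ ≤ 6 * ‖resolvent T (‖(t : ℂ) * α‖ : ℂ) x‖ :=
        norm_resolvent_apply_le_of_nonneg hT hx hz
    _ ≤ 6 * (‖resolvent T ((t : ℂ) * ‖α‖)‖ * ‖x‖) := by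
        rw [hnorm, Complex.ofReal_mul]; gcongr; exact ContinuousLinearMap.le_opNorm _ _
    _ = ‖resolvent T ((t : ℂ) * ‖α‖)‖ * (6 * ‖x‖) := by ring

theorem pole_order_peripheral_le_pole_order_spectralRadius_general
    {A : Type*} [NonUnitalCStarAlgebra A] [PartialOrder A] [StarOrderedRing A]
    (T : A →L[ℂ] A) (hT : ∀ x : A, 0 ≤ x → 0 ≤ T x)
    (k m : ℕ)
    (hrpole : IsPoleOfOrder (fun z : ℂ => resolvent T z)
      (((spectralRadius ℂ T).toReal : ℝ) : ℂ) k)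
    (α : ℂ) (hαr : ‖α‖ = (spectralRadius ℂ T).toReal)
    (hαpole : IsPoleOfOrder (fun z : ℂ => resolvent T z) α m) :
    m ≤ k := by
  set r := (spectralRadius ℂ T).toReal
  rcases eq_or_ne α 0 with rfl | hα₀
  · rw [← hαr, norm_zero, Complex.ofReal_zero] at hrpole
    exact hαpole.le_of_isPoleOfOrder hrpole
  have hr₀ : 0 < r := hαr ▸ norm_pos_iff.mpr hα₀
  obtain ⟨P, -, hP⟩ := hrpole.exists_tendsto
  obtain ⟨Q, hQ₀, hQ⟩ := hαpole.exists_tendsto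
  obtain ⟨x, hx, hQx⟩ := CStarAlgebra.exists_nonneg_apply_ne_zero (f := (Q : A →ₗ[ℂ] A))
    (ContinuousLinearMap.coe_injective.ne hQ₀)
  have hu := tendsto_radial_norm_pow_mul (f := fun z => resolvent T z x) hα₀
    (((ContinuousLinearMap.apply ℂ A x).continuous.tendsto Q).comp hQ)
  have hv := (tendsto_radial_norm_pow_mul (Complex.ofReal_ne_zero.mpr hr₀.ne') hP).mul_const
    (6 * ‖x‖)
  rw [Complex.norm_real, Real.norm_of_nonneg hr₀.le, ← hαr] at hv
  refine le_of_tendsto_pow_mul_of_abs_le ?_ ?_ hu (norm_ne_zero_iff.mpr hQx)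
    (hv.congr fun t => mul_assoc _ _ _) ?_
  · exact (((continuous_id.sub continuous_const).mul continuous_const).tendsto' 1 0
      (by simp)).mono_left nhdsWithin_le_nhds
  · filter_upwards [self_mem_nhdsWithin] with t (ht : 1 < t)
    exact mul_nonneg (sub_nonneg.mpr ht.le) (norm_nonneg _)
  · filter_upwards [self_mem_nhdsWithin] with t (ht : 1 < t)
    rw [abs_norm]
    exact norm_resolvent_ofReal_mul_apply_le hT hx hαr hα₀ ht

/-- For a positive bounded operator `T` on a C*-algebra, if the resolvent has a pole of
order `k` at `r(T)` and a pole of order `m` at a peripheral spectral point `α`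
(`|α| = r(T)`), then `m ≤ k`. -/
theorem pole_order_peripheral_le_pole_order_spectralRadius
    {A : Type*} [NonUnitalCStarAlgebra A] [PartialOrder A] [StarOrderedRing A]
    (T : A →L[ℂ] A) (hT : ∀ x : A, 0 ≤ x → 0 ≤ T x)
    (k m : ℕ) (hk : 1 ≤ k) (hm : 1 ≤ m)
    (hrpole : IsPoleOfOrder (fun z : ℂ => resolvent T z)
      (((spectralRadius ℂ T).toReal : ℝ) : ℂ) k)
    (α : ℂ) (hα : α ∈ spectrum ℂ T) (hαr : ‖α‖ = (spectralRadius ℂ T).toReal)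
    (hαpole : IsPoleOfOrder (fun z : ℂ => resolvent T z) α m) :
    m ≤ k :=
  pole_order_peripheral_le_pole_order_spectralRadius_general T hT k m hrpole α hαr hαpole
end

section
/- Let A be a C*-algebra and let T : A → A be a positive bounded linear operator with spectral radius r := r(T) > 0. Let α ∈ ℂ with |α| = r, let μ > r, and set λ := (μ/r)·α, so |λ| = μ and |λ − α| = μ − r. Then for every m ∈ ℕ, every positive continuous linear functional φ on A with ‖φ‖ ≤ 1, and every positive x ∈ A with ‖x‖ ≤ 1, one has |λ − α|^m · |φ((λ·id − T)⁻¹ x)| ≤ (μ − r)^m · ‖(μ·id − T)⁻¹‖. -/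
/-!
For `|z| > r(T)` the resolvent is the Neumann series `R(z, T) = ∑ z⁻ⁿ⁻¹ Tⁿ`. Applied to a positive
`x` and a positive functional `φ`, the terms `φ (Tⁿ x)` are nonnegative reals, so
`|φ (R(z, T) x)| ≤ ∑ |z|⁻ⁿ⁻¹ φ (Tⁿ x) = φ (R(|z|, T) x)`. For `z = λ` this gives
`|φ (R(λ, T) x)| ≤ ‖R(μ, T)‖`, and `|λ - α| = μ - r` because `λ` lies on the ray through `α`.
-/

open scoped ComplexOrder

namespace spectrum

variable {A : Type*} [NormedRing A] [NormedAlgebra ℂ A] [CompleteSpace A]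

theorem hasSum_smul_pow_inverse_one_sub_smul {a : A} {z : ℂ}
    (hz : ‖z‖ₑ < (spectralRadius ℂ a)⁻¹) :
    HasSum (fun n : ℕ => z ^ n • a ^ n) (Ring.inverse (1 - z • a)) := by
  obtain ⟨R, hzR, hR⟩ := ENNReal.lt_iff_exists_nnreal_btwn.mp hz
  have hzR' : ‖z‖₊ < R := ENNReal.coe_lt_coe.mp hzR
  -- The Neumann series is the Taylor series at `0` of `z ↦ (1 - z • a)⁻¹`, which is holomorphic
  -- on the disc of radius `(spectralRadius ℂ a)⁻¹`, not just on that of radius `‖a‖⁻¹`.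
  have H := (hasFPowerSeriesOnBall_inverse_one_sub_smul ℂ a).exchange_radius
    ((differentiableOn_inverse_one_sub_smul hR).hasFPowerSeriesOnBall (pos_of_gt hzR'))
  simpa [ContinuousMultilinearMap.mkPiRing_apply] using
    H.hasSum (y := z) (by simpa [edist_zero_right] using NNReal.coe_lt_coe.mpr hzR')

theorem hasSum_resolvent {a : A} {z : ℂ} (hz : spectralRadius ℂ a < ‖z‖ₑ) :
    HasSum (fun n : ℕ => z⁻¹ ^ (n + 1) • a ^ n) (resolvent a z) := by
  have hz0 : z ≠ 0 := by
    rintro rfl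
    simp at hz
  have hinv : ‖z⁻¹‖ₑ < (spectralRadius ℂ a)⁻¹ := by
    rwa [ENNReal.lt_inv_iff_lt_inv, enorm_inv hz0, inv_inv]
  have hres : resolvent a z = z⁻¹ • Ring.inverse (1 - z⁻¹ • a) := by
    have := congr(z⁻¹ • $(units_smul_resolvent_self (r := Units.mk0 z hz0) (a := a)))
    simpa [Units.smul_def, resolvent, smul_smul, inv_mul_cancel₀ hz0] using this
  rw [hres]
  simpa [pow_succ', mul_smul] using (hasSum_smul_pow_inverse_one_sub_smul hinv).const_smul z⁻¹

end spectrum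

theorem Complex.norm_le_norm_of_hasSum {ι : Type*} {f g : ι → ℂ} {s t : ℂ}
    (hf : HasSum f s) (hg : HasSum g t) (hg0 : ∀ i, 0 ≤ g i) (hfg : ∀ i, ‖f i‖ ≤ ‖g i‖) :
    ‖s‖ ≤ ‖t‖ :=
  calc ‖s‖ ≤ t.re := hf.norm_le_of_bounded (reCLM.hasSum hg) fun i =>
        (hfg i).trans (congrArg re (norm_of_nonneg' (hg0 i))).le
    _ ≤ ‖t‖ := re_le_norm t

namespace ContinuousLinearMap

variable {E : Type*} [NormedAddCommGroup E] [NormedSpace ℂ E] [LE E] {T : E →L[ℂ] E}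

theorem pow_apply_nonneg_s13 (hT : ∀ x, 0 ≤ x → 0 ≤ T x) {x : E} (hx : 0 ≤ x) (n : ℕ) :
    0 ≤ (T ^ n) x := by
  induction n with
  | zero => exact hx
  | succ n ih => exact pow_succ' T n ▸ hT _ ih

theorem norm_apply_resolvent_apply_le [CompleteSpace E] (hT : ∀ x, 0 ≤ x → 0 ≤ T x)
    {φ : E →L[ℂ] ℂ} (hφ : ∀ y, 0 ≤ y → 0 ≤ φ y) {x : E} (hx : 0 ≤ x) {z : ℂ}
    (hz : spectralRadius ℂ T < ‖z‖ₑ) :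
    ‖φ (resolvent T z x)‖ ≤ ‖φ (resolvent T (‖z‖ : ℂ) x)‖ := by
  let evalφ : (E →L[ℂ] E) →L[ℂ] ℂ := φ.comp (apply ℂ E x)
  have hz' : spectralRadius ℂ T < ‖(‖z‖ : ℂ)‖ₑ := by
    rwa [← ofReal_norm, Complex.norm_real, norm_norm, ofReal_norm]
  refine Complex.norm_le_norm_of_hasSum ((spectrum.hasSum_resolvent hz).mapL evalφ)
    ((spectrum.hasSum_resolvent hz').mapL evalφ) (fun n => ?_) (fun n => ?_)
  · have : (0 : ℂ) ≤ ((‖z‖⁻¹ ^ (n + 1) : ℝ) : ℂ) := Complex.zero_le_real.mpr (by positivity)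
    simpa [evalφ] using mul_nonneg this (hφ _ (pow_apply_nonneg_s13 hT hx n))
  · simp [evalφ]

end ContinuousLinearMap

theorem pole_estimate_of_positive_general
    {A : Type*} [NonUnitalCStarAlgebra A] [PartialOrder A]
    (T : A →L[ℂ] A) (hT : ∀ x : A, 0 ≤ x → 0 ≤ T x)
    (r : ℝ) (hr : r = (spectralRadius ℂ T).toReal) (hrpos : 0 < r)
    (α : ℂ) (hα : ‖α‖ = r)
    (μ : ℝ) (hμ : r < μ)
    (lam : ℂ) (hlam : lam = ((μ / r : ℝ) : ℂ) * α)
    (m : ℕ)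
    (φ : A →L[ℂ] ℂ) (hφpos : ∀ y : A, 0 ≤ y → 0 ≤ φ y) (hφnorm : ‖φ‖ ≤ 1)
    (x : A) (hx : 0 ≤ x) (hxnorm : ‖x‖ ≤ 1) :
    ‖lam - α‖ ^ m * ‖φ (resolvent T lam x)‖ ≤
      (μ - r) ^ m * ‖resolvent T ((μ : ℝ) : ℂ)‖ := by
  have hnorm_lam : ‖lam‖ = μ := by
    rw [hlam, norm_mul, Complex.norm_real, hα,
      Real.norm_of_nonneg (div_pos (hrpos.trans hμ) hrpos).le]
    field_simp
  have hnorm_sub : ‖lam - α‖ = μ - r := by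
    have hμr : 0 ≤ μ / r - 1 := sub_nonneg.mpr ((one_le_div hrpos).mpr hμ.le)
    rw [show lam - α = ((μ / r - 1 : ℝ) : ℂ) * α by rw [hlam]; push_cast; ring, norm_mul,
      Complex.norm_real, Real.norm_of_nonneg hμr, hα]
    field_simp
  have hlt : spectralRadius ℂ T < ‖lam‖ₑ := by
    refine (ENNReal.toReal_lt_toReal ?_ enorm_ne_top).mp (by rwa [← hr, toReal_enorm, hnorm_lam])
    exact (ENNReal.toReal_pos_iff.mp (hr ▸ hrpos)).2.ne
  have hres := ContinuousLinearMap.norm_apply_resolvent_apply_le hT hφpos hx hlt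
  rw [hnorm_lam] at hres
  rw [hnorm_sub]
  gcongr
  calc ‖φ (resolvent T lam x)‖ ≤ ‖φ (resolvent T μ x)‖ := hres
    _ ≤ 1 * ‖resolvent T μ x‖ := φ.le_of_opNorm_le hφnorm _
    _ ≤ ‖resolvent T μ‖ := by simpa using (resolvent T μ).le_opNorm_of_le hxnorm

/-- Key estimate for the maximality of the pole order at `r(T)`: for a positive operator `T`
on a C*-algebra with `r := r(T) > 0`, `α ∈ ℂ` with `|α| = r`, `μ > r` and `λ := (μ/r)·α`,
for every `m`, every positive functional `φ` with `‖φ‖ ≤ 1` and positive `x` with `‖x‖ ≤ 1`,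
`|λ - α|^m · |φ(R(λ,T)x)| ≤ (μ - r)^m · ‖R(μ,T)‖`. -/
theorem pole_estimate_of_positive
    {A : Type*} [NonUnitalCStarAlgebra A] [PartialOrder A] [StarOrderedRing A]
    (T : A →L[ℂ] A) (hT : ∀ x : A, 0 ≤ x → 0 ≤ T x)
    (r : ℝ) (hr : r = (spectralRadius ℂ T).toReal) (hrpos : 0 < r)
    (α : ℂ) (hα : ‖α‖ = r)
    (μ : ℝ) (hμ : r < μ)
    (lam : ℂ) (hlam : lam = ((μ / r : ℝ) : ℂ) * α)
    (m : ℕ)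
    (φ : A →L[ℂ] ℂ) (hφpos : ∀ y : A, 0 ≤ y → 0 ≤ φ y) (hφnorm : ‖φ‖ ≤ 1)
    (x : A) (hx : 0 ≤ x) (hxnorm : ‖x‖ ≤ 1) :
    ‖lam - α‖ ^ m * ‖φ (resolvent T lam x)‖ ≤
      (μ - r) ^ m * ‖resolvent T ((μ : ℝ) : ℂ)‖ :=
  pole_estimate_of_positive_general T hT r hr hrpos α hα μ hμ lam hlam m φ hφpos hφnorm x hx hxnorm
end
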